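/- Let A be a commutative noetherian ring and f: M → N a homomorphism of finitely generated A-modules. Then the maps G_f(P): G_M(P) → G_N(P) are surjective for every finitely generated A-module P if and only if the induced map R(f): R(M) → R(N) of Rees algebras is surjective. -/

import Mathlib

open Module LinearMap TensorProduct

/-- The relation on the tensor algebra whose quotient is the symmetric algebra. -/
inductive SymRel (A : Type) [CommRing A] (M : Type) [AddCommGroup M] [Module A M] :
    TensorAlgebra A M → TensorAlgebra A M → Prop
  | mul_comm (x y : M) : SymRel A M (TensorAlgebra.ι A x * TensorAlgebra.ι A y)
      (TensorAlgebra.ι A y * TensorAlgebra.ι A x)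

/-- The symmetric algebra `Sym(M)` of a module `M`. -/
abbrev SymmAlg (A : Type) [CommRing A] (M : Type) [AddCommGroup M] [Module A M] : Type :=
  RingQuot (SymRel A M)

variable {A : Type} [CommRing A] {M N L : Type} [AddCommGroup M] [Module A M]
  [AddCommGroup N] [Module A N] [AddCommGroup L] [Module A L]

private lemma symmAlg_comm_aux (x y : TensorAlgebra A M) :
    RingQuot.mkAlgHom A (SymRel A M) x * RingQuot.mkAlgHom A (SymRel A M) y =
      RingQuot.mkAlgHom A (SymRel A M) y * RingQuot.mkAlgHom A (SymRel A M) x := by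
  induction x using TensorAlgebra.induction with
  | algebraMap r => simp [Algebra.commutes]
  | ι m =>
    induction y using TensorAlgebra.induction with
    | algebraMap r => simp [Algebra.commutes]
    | ι n => simpa [map_mul] using (RingQuot.mkAlgHom_rel A (SymRel.mul_comm m n))
    | mul a b ha hb => rw [map_mul, ← mul_assoc, ha, mul_assoc, hb, ← mul_assoc]
    | add a b ha hb => rw [map_add, mul_add, add_mul, ha, hb]
  | mul a b ha hb => rw [map_mul, mul_assoc, hb, ← mul_assoc, ha, mul_assoc]
  | add a b ha hb => rw [map_add, add_mul, mul_add, ha, hb]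

noncomputable instance (A : Type) [CommRing A] (M : Type) [AddCommGroup M] [Module A M] :
    CommRing (SymmAlg A M) :=
  { (inferInstance : Ring (SymmAlg A M)) with
    mul_comm := fun a b => by
      obtain ⟨x, rfl⟩ := RingQuot.mkAlgHom_surjective A (SymRel A M) a
      obtain ⟨y, rfl⟩ := RingQuot.mkAlgHom_surjective A (SymRel A M) b
      exact symmAlg_comm_aux x y }

/-- The canonical inclusion of `M` into the degree-one part of `Sym(M)`. -/
noncomputable def symι (A : Type) [CommRing A] {M : Type} [AddCommGroup M] [Module A M] :
    M →ₗ[A] SymmAlg A M :=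
  (RingQuot.mkAlgHom A (SymRel A M)).toLinearMap ∘ₗ TensorAlgebra.ι A

/-- Functoriality of the symmetric algebra: `Sym(g) : Sym(M) → Sym(N)`. -/
noncomputable def symMap (A : Type) [CommRing A] {M N : Type} [AddCommGroup M] [Module A M]
    [AddCommGroup N] [Module A N] (g : M →ₗ[A] N) : SymmAlg A M →ₐ[A] SymmAlg A N :=
  RingQuot.liftAlgHom A ⟨TensorAlgebra.lift A ((symι A) ∘ₗ g), by
    intro x y h
    cases h with
    | mul_comm a b => simp [mul_comm]⟩

@[simp] lemma symMap_ι (g : M →ₗ[A] N) (m : M) :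
    symMap A g (symι A m) = symι A (g m) := by
  simp [symMap, symι, RingQuot.liftAlgHom_mkAlgHom_apply]

lemma symmAlg_hom_ext {B : Type} [Semiring B] [Algebra A B] {f g : SymmAlg A M →ₐ[A] B}
    (h : ∀ m : M, f (symι A m) = g (symι A m)) : f = g := by
  have key : f.comp (RingQuot.mkAlgHom A (SymRel A M)) =
      g.comp (RingQuot.mkAlgHom A (SymRel A M)) := by
    apply TensorAlgebra.hom_ext
    apply LinearMap.ext
    intro m
    simpa [symι] using h m
  apply AlgHom.ext
  intro x
  obtain ⟨x, rfl⟩ := RingQuot.mkAlgHom_surjective A (SymRel A M) x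
  exact AlgHom.congr_fun key x

lemma symMap_comp_apply (g : N →ₗ[A] L) (f : M →ₗ[A] N) (x : SymmAlg A M) :
    symMap A (g ∘ₗ f) x = symMap A g (symMap A f x) := by
  have : symMap A (g ∘ₗ f) = (symMap A g).comp (symMap A f) := by
    apply symmAlg_hom_ext
    intro m
    simp
  rw [this]; rfl

/-- The data of a linear map from `M` into a finitely generated free module. -/
structure FreeTarget (A : Type) [CommRing A] (M : Type) [AddCommGroup M] [Module A M] where
  E : Type
  [instAddCommGroup : AddCommGroup E]
  [instModule : Module A E]
  [instFree : Module.Free A E]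
  [instFinite : Module.Finite A E]
  g : M →ₗ[A] E

attribute [instance] FreeTarget.instAddCommGroup FreeTarget.instModule
  FreeTarget.instFree FreeTarget.instFinite

/-- The ideal `I(M) ⊆ Sym(M)`: the intersection over all maps `g : M → E` into finitely
generated free modules of the kernels of `Sym(g)`. -/
noncomputable def reesIdeal (A : Type) [CommRing A] (M : Type) [AddCommGroup M]
    [Module A M] : Ideal (SymmAlg A M) :=
  ⨅ d : FreeTarget A M, RingHom.ker (symMap A d.g)

lemma reesIdeal_le_comap (f : M →ₗ[A] N) :
    reesIdeal A M ≤ Ideal.comap (symMap A f) (reesIdeal A N) := by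
  intro x hx
  simp only [reesIdeal, Ideal.mem_iInf] at hx
  simp only [Ideal.mem_comap, reesIdeal, Ideal.mem_iInf]
  intro d
  have hd := hx ⟨d.E, d.g ∘ₗ f⟩
  rw [RingHom.mem_ker] at hd ⊢
  rw [← symMap_comp_apply]
  exact hd

/-- The Rees algebra `R(M) = Sym(M)/I(M)` of a module `M`. -/
noncomputable abbrev ReesAlg (A : Type) [CommRing A] (M : Type) [AddCommGroup M]
    [Module A M] : Type :=
  SymmAlg A M ⧸ reesIdeal A M

/-- The induced map `R(f) : R(M) → R(N)` of Rees algebras. -/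
noncomputable def reesMap (A : Type) [CommRing A] {M N : Type} [AddCommGroup M]
    [Module A M] [AddCommGroup N] [Module A N] (f : M →ₗ[A] N) :
    ReesAlg A M →ₐ[A] ReesAlg A N :=
  Ideal.quotientMapₐ (reesIdeal A N) (symMap A f) (reesIdeal_le_comap f)

open Module LinearMap TensorProduct

/-- The natural map `α_{M,P} : M ⊗ P → Hom(M*, P)`, `α(m ⊗ p)(λ) = λ(m) • p`. -/
noncomputable def alphaMap (A : Type) [CommRing A] (M P : Type) [AddCommGroup M]
    [Module A M] [AddCommGroup P] [Module A P] :
    M ⊗[A] P →ₗ[A] (Module.Dual A M →ₗ[A] P) :=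
  (dualTensorHom A (Module.Dual A M) P) ∘ₗ
    (TensorProduct.map (Module.Dual.eval A M) LinearMap.id)

/-- `G_M(P)` is the image of `α_{M,P} : M ⊗ P → Hom(M*, P)`. -/
noncomputable def GFun (A : Type) [CommRing A] (M P : Type) [AddCommGroup M] [Module A M]
    [AddCommGroup P] [Module A P] : Submodule A (Module.Dual A M →ₗ[A] P) :=
  LinearMap.range (alphaMap A M P)

/-!
Both conditions are equivalent to `N = f(M) + ker (N → N**)`.

For `G` this is visible at `P = A`, where `G_M(A)` is the image of `M` in `M**`; conversely,
under the condition every `n ⊗ p` may be replaced by some `f(m) ⊗ p`.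

For `R`, choose `g : N → Aᵏ` whose transpose is onto `N*` (possible since `N*` is finitely
generated). Every map from `N` to a finite free module factors through `g`, so
`I(N) = ker Sym(g)`, and `R(f)` is onto iff `Sym(g ∘ f)` and `Sym(g)` have the same image.
Comparing degree-one parts, this says `g(N) ⊆ g(f(M))`.
-/

section SymmetricAlgebra

variable {E : Type} [AddCommGroup E] [Module A E]

noncomputable def symLift {B : Type} [CommRing B] [Algebra A B] (φ : M →ₗ[A] B) :
    SymmAlg A M →ₐ[A] B :=
  RingQuot.liftAlgHom A ⟨TensorAlgebra.lift A φ, by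
    rintro _ _ ⟨x, y⟩
    simp [mul_comm]⟩

@[simp] lemma symLift_symι {B : Type} [CommRing B] [Algebra A B] (φ : M →ₗ[A] B) (m : M) :
    symLift φ (symι A m) = φ m := by
  simp [symLift, symι, RingQuot.liftAlgHom_mkAlgHom_apply]

lemma adjoin_range_symι : Algebra.adjoin A (Set.range (symι A : M → SymmAlg A M)) = ⊤ := by
  rw [symι, LinearMap.coe_comp, Set.range_comp, AlgHom.coe_toLinearMap, ← AlgHom.map_adjoin,
    TensorAlgebra.adjoin_range_ι, Algebra.map_top, AlgHom.range_eq_top]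
  exact RingQuot.mkAlgHom_surjective A (SymRel A M)

lemma range_symMap (u : M →ₗ[A] E) :
    (symMap A u).range = Algebra.adjoin A (symι A '' LinearMap.range u) := by
  rw [← Algebra.map_top, ← adjoin_range_symι, AlgHom.map_adjoin, ← Set.range_comp,
    LinearMap.coe_range, ← Set.range_comp]
  congr 2
  ext m
  simp

/-- Read off the degree-one component in the square-zero extension `A ⊕ E`, where the second
coordinate satisfies the Leibniz rule. -/
lemma mem_of_symι_mem_adjoin [Module Aᵐᵒᵖ E] [IsCentralScalar A E] {W : Submodule A E} {e : E}
    (he : symι A e ∈ Algebra.adjoin A (symι A '' (W : Set E))) : e ∈ W := by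
  suffices ∀ x ∈ Algebra.adjoin A (symι A '' (W : Set E)),
      (symLift (TrivSqZeroExt.inrHom A E) x).snd ∈ W by
    simpa using this _ he
  intro x hx
  induction hx using Algebra.adjoin_induction with
  | mem z hz =>
    obtain ⟨w, hw, rfl⟩ := hz
    simpa using hw
  | algebraMap r => simp [TrivSqZeroExt.algebraMap_eq_inl]
  | add a b _ _ ha hb => simpa using add_mem ha hb
  | mul a b _ _ ha hb =>
    rw [map_mul, TrivSqZeroExt.snd_mul, op_smul_eq_smul]
    exact add_mem (W.smul_mem _ hb) (W.smul_mem _ ha)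

lemma range_symMap_le_range_symMap_iff [Module Aᵐᵒᵖ E] [IsCentralScalar A E]
    (u : N →ₗ[A] E) (w : M →ₗ[A] E) :
    (symMap A u).range ≤ (symMap A w).range ↔ LinearMap.range u ≤ LinearMap.range w := by
  rw [range_symMap, range_symMap]
  exact ⟨fun h e he => mem_of_symι_mem_adjoin (h (Algebra.subset_adjoin ⟨e, he, rfl⟩)),
    fun h => Algebra.adjoin_mono (Set.image_mono h)⟩

end SymmetricAlgebra

section Duality

variable {E F : Type} [AddCommGroup E] [Module A E] [AddCommGroup F] [Module A F]

lemma exists_comp_eq_of_dualMap_surjective {g : N →ₗ[A] E} (hg : Function.Surjective g.dualMap)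
    [Module.Free A F] [Module.Finite A F] (d : N →ₗ[A] F) : ∃ q : E →ₗ[A] F, q ∘ₗ g = d := by
  let b := Module.Free.chooseBasis A F
  choose μ hμ using fun j => hg (LinearMap.proj j ∘ₗ b.equivFun.toLinearMap ∘ₗ d)
  refine ⟨b.equivFun.symm.toLinearMap ∘ₗ LinearMap.pi μ, LinearMap.ext fun n => ?_⟩
  apply b.equivFun.injective
  funext j
  simpa only [LinearMap.comp_apply, LinearEquiv.coe_coe, LinearEquiv.apply_symm_apply,
    LinearMap.pi_apply, dualMap_apply, proj_apply] using LinearMap.congr_fun (hμ j) n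

lemma ker_eq_ker_eval_of_dualMap_surjective [Module.Free A E] {g : N →ₗ[A] E}
    (hg : Function.Surjective g.dualMap) : ker g = ker (Module.Dual.eval A N) := by
  ext n
  rw [mem_ker, mem_ker, ← Module.forall_dual_apply_eq_zero_iff A (g n)]
  constructor
  · intro h
    ext l
    obtain ⟨μ, rfl⟩ := hg l
    exact h μ
  · intro h μ
    exact LinearMap.congr_fun h (g.dualMap μ)

lemma exists_dualMap_surjective_pi [IsNoetherianRing A] [Module.Finite A N] :
    ∃ (k : ℕ) (g : N →ₗ[A] (Fin k → A)), Function.Surjective g.dualMap := by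
  obtain ⟨k, s, hs⟩ := Module.Finite.exists_fin (R := A) (M := Module.Dual A N)
  refine ⟨k, LinearMap.pi s, range_eq_top.mp (top_le_iff.mp ?_)⟩
  rw [← hs, Submodule.span_le]
  rintro _ ⟨i, rfl⟩
  exact ⟨LinearMap.proj i, rfl⟩

end Duality

lemma range_le_range_comp_iff {E : Type} [AddCommGroup E] [Module A E] (f : M →ₗ[A] N)
    (g : N →ₗ[A] E) : range g ≤ range (g ∘ₗ f) ↔ range f ⊔ ker g = ⊤ := by
  rw [range_comp, range_eq_map, LinearMap.map_le_map_iff, top_le_iff]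

section Rees

variable {E : Type} [AddCommGroup E] [Module A E]

lemma reesMap_surjective_iff_of_reesIdeal_eq {g : N →ₗ[A] E}
    (hI : reesIdeal A N = RingHom.ker (symMap A g)) (f : M →ₗ[A] N) :
    Function.Surjective (reesMap A f) ↔ (symMap A g).range ≤ (symMap A (g ∘ₗ f)).range := by
  have hmk : ∀ x y, reesMap A f (Ideal.Quotient.mk _ x) = Ideal.Quotient.mk _ y ↔
      symMap A (g ∘ₗ f) x = symMap A g y := fun x y => by
    rw [reesMap, Ideal.quotient_map_mkₐ, Ideal.Quotient.mkₐ_eq_mk, Ideal.Quotient.eq, hI,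
      RingHom.mem_ker, map_sub, sub_eq_zero, symMap_comp_apply]
  constructor
  · rintro h _ ⟨y, rfl⟩
    obtain ⟨x, hx⟩ := h (Ideal.Quotient.mk _ y)
    obtain ⟨x, rfl⟩ := Ideal.Quotient.mk_surjective x
    exact ⟨x, (hmk x y).mp hx⟩
  · intro h y
    obtain ⟨y, rfl⟩ := Ideal.Quotient.mk_surjective y
    obtain ⟨x, hx⟩ := h (AlgHom.mem_range_self _ y)
    exact ⟨Ideal.Quotient.mk _ x, (hmk x y).mpr hx⟩

lemma reesIdeal_eq_ker_symMap [Module.Free A E] [Module.Finite A E] {g : N →ₗ[A] E}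
    (hg : Function.Surjective g.dualMap) : reesIdeal A N = RingHom.ker (symMap A g) := by
  refine le_antisymm (iInf_le (fun d : FreeTarget A N => RingHom.ker (symMap A d.g)) ⟨E, g⟩)
    (le_iInf fun d x hx => ?_)
  obtain ⟨q, hq⟩ := exists_comp_eq_of_dualMap_surjective hg d.g
  rw [RingHom.mem_ker] at hx ⊢
  rw [← hq, symMap_comp_apply, hx, map_zero]

end Rees

theorem reesMap_surjective_iff [IsNoetherianRing A] [Module.Finite A N] (f : M →ₗ[A] N) :
    Function.Surjective (reesMap A f) ↔ range f ⊔ ker (Module.Dual.eval A N) = ⊤ := by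
  obtain ⟨k, g, hg⟩ := exists_dualMap_surjective_pi (A := A) (N := N)
  rw [reesMap_surjective_iff_of_reesIdeal_eq (reesIdeal_eq_ker_symMap hg),
    range_symMap_le_range_symMap_iff, range_le_range_comp_iff,
    ker_eq_ker_eval_of_dualMap_surjective hg]

section GFun

variable {P : Type} [AddCommGroup P] [Module A P]

@[simp] lemma alphaMap_tmul_apply (m : M) (p : P) (l : Module.Dual A M) :
    alphaMap A M P (m ⊗ₜ p) l = l m • p := by
  simp [alphaMap]

lemma alphaMap_self :
    alphaMap A M A = Module.Dual.eval A M ∘ₗ (TensorProduct.rid A M).toLinearMap := by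
  ext m l
  simp [mul_comm]

lemma gFun_self : GFun A M A = range (Module.Dual.eval A M) := by
  rw [GFun, alphaMap_self, range_comp_of_range_eq_top _ (LinearEquiv.range _)]

lemma map_lcomp_dualMap_gFun_self (f : M →ₗ[A] N) :
    (GFun A M A).map (lcomp A A f.dualMap) = range (Module.Dual.eval A N ∘ₗ f) := by
  rw [gFun_self, ← range_comp]
  rfl

lemma sup_ker_eval_eq_top_of_gFun_le (f : M →ₗ[A] N)
    (h : GFun A N A ≤ (GFun A M A).map (lcomp A A f.dualMap)) :
    range f ⊔ ker (Module.Dual.eval A N) = ⊤ := by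
  rwa [gFun_self, map_lcomp_dualMap_gFun_self, range_le_range_comp_iff] at h

lemma gFun_le_map_of_sup_ker_eval_eq_top (f : M →ₗ[A] N)
    (h : range f ⊔ ker (Module.Dual.eval A N) = ⊤) :
    GFun A N P ≤ (GFun A M P).map (lcomp A P f.dualMap) := by
  rintro _ ⟨x, rfl⟩
  induction x using TensorProduct.induction_on with
  | zero => simp
  | tmul n p =>
    obtain ⟨_, ⟨m, rfl⟩, z, hz, rfl⟩ := Submodule.mem_sup.mp (h ▸ Submodule.mem_top (x := n))
    refine ⟨alphaMap A M P (m ⊗ₜ p), ⟨_, rfl⟩, LinearMap.ext fun l => ?_⟩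
    have hlz : l z = 0 := LinearMap.congr_fun (mem_ker.mp hz) l
    simp [hlz]
  | add x y hx hy =>
    rw [map_add]
    exact add_mem hx hy

end GFun

theorem stmt18 (A : Type) [CommRing A] [IsNoetherianRing A]
    (M N : Type) [AddCommGroup M] [Module A M]
    [AddCommGroup N] [Module A N] [Module.Finite A N]
    (f : M →ₗ[A] N) :
    (∀ (P : Type) [AddCommGroup P] [Module A P] [Module.Finite A P],
        GFun A N P ≤ Submodule.map (LinearMap.lcomp A P f.dualMap) (GFun A M P)) ↔
      Function.Surjective (reesMap A f) := by
  rw [reesMap_surjective_iff]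
  exact ⟨fun h => sup_ker_eval_eq_top_of_gFun_le f (h A),
    fun h _ _ _ _ => gFun_le_map_of_sup_ker_eval_eq_top f h⟩
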